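/- arXiv:1907.00723 — 2 statements merged into one kernel-verified Lean document; each statement's English description precedes it below -/
import Mathlib

section
/- Let p ≥ 1, let Σ₀ ∈ ℝ^{p×p} be symmetric positive definite with inverse Ω₀ = Σ₀⁻¹, let e ∈ ℝᵖ be a standard basis vector, and set β̂ = Ω₀e (so Σ₀β̂ = e). Let Σ' ∈ ℝ^{p×p} and λ ≥ 0 satisfy ‖Ω₀‖_{L1} · |Σ' − Σ₀|_∞ ≤ λ, and let β ∈ ℝᵖ satisfy |Σ'β − e|_∞ ≤ λ. Then |Σ₀(β̂ − β)|_∞ ≤ 3λ + λ|β|₁ / ‖Ω₀‖_{L1}. -/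
open Matrix

/-- Elementwise ℓ∞ norm of a matrix: `max_{i,j} |A i j|`. -/
noncomputable def matInf {p : ℕ} (A : Matrix (Fin p) (Fin p) ℝ) : ℝ :=
  ⨆ i, ⨆ j, |A i j|

/-- Matrix L₁ norm: maximum absolute column sum. -/
noncomputable def matL1 {p : ℕ} (A : Matrix (Fin p) (Fin p) ℝ) : ℝ :=
  ⨆ j, ∑ i, |A i j|

/-- Vector ℓ∞ norm. -/
noncomputable def vecInf {p : ℕ} (v : Fin p → ℝ) : ℝ :=
  ⨆ i, |v i|

/-- Vector ℓ₁ norm. -/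
def vecL1 {p : ℕ} (v : Fin p → ℝ) : ℝ :=
  ∑ i, |v i|


lemma colsum_le_matL1 {p : ℕ} [Nonempty (Fin p)] (A : Matrix (Fin p) (Fin p) ℝ) (k : Fin p) :
    (∑ i, |A i k|) ≤ matL1 A :=
  le_ciSup (f := fun j => ∑ i, |A i j|) (Set.Finite.bddAbove (Set.finite_range _)) k

lemma entry_le_matInf {p : ℕ} [Nonempty (Fin p)] (A : Matrix (Fin p) (Fin p) ℝ) (a b : Fin p) :
    |A a b| ≤ matInf A :=
  le_trans (le_ciSup (f := fun j => |A a j|) (Set.Finite.bddAbove (Set.finite_range _)) b)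
    (le_ciSup (f := fun i => ⨆ j, |A i j|) (Set.Finite.bddAbove (Set.finite_range _)) a)

lemma abs_le_vecInf {p : ℕ} [Nonempty (Fin p)] (v : Fin p → ℝ) (a : Fin p) :
    |v a| ≤ vecInf v :=
  le_ciSup (f := fun i => |v i|) (Set.Finite.bddAbove (Set.finite_range _)) a

lemma vecInf_le {p : ℕ} [Nonempty (Fin p)] (v : Fin p → ℝ) (c : ℝ) (h : ∀ a, |v a| ≤ c) :
    vecInf v ≤ c := ciSup_le h

/-- Residual bound for one column (first chain of inequalities in the proof of Lemma 1). -/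
theorem stmt6 {p : ℕ} (hp : 1 ≤ p)
    (S₀ : Matrix (Fin p) (Fin p) ℝ) (hSsym : S₀.IsSymm) (hSpd : S₀.PosDef)
    (Ω₀ : Matrix (Fin p) (Fin p) ℝ) (hΩ : Ω₀ = S₀⁻¹)
    (i₀ : Fin p) (βhat : Fin p → ℝ) (hβhat : βhat = Ω₀.mulVec (Pi.single i₀ 1))
    (S' : Matrix (Fin p) (Fin p) ℝ) (lam : ℝ) (hlam : 0 ≤ lam)
    (hlow : matL1 Ω₀ * matInf (S' - S₀) ≤ lam)
    (β : Fin p → ℝ) (hstop : vecInf (S'.mulVec β - Pi.single i₀ 1) ≤ lam) :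
    vecInf (S₀.mulVec (βhat - β)) ≤ 3 * lam + lam * vecL1 β / matL1 Ω₀ := by
  have hne : Nonempty (Fin p) := ⟨⟨0, hp⟩⟩
  have hdet : IsUnit S₀.det := isUnit_iff_ne_zero.mpr hSpd.det_pos.ne'
  have hSinv : S₀ * Ω₀ = 1 := by rw [hΩ]; exact Matrix.mul_nonsing_inv _ hdet
  have hΩne : Ω₀ ≠ 0 := by
    intro h
    rw [h, Matrix.mul_zero] at hSinv
    have h1 : (1 : Matrix (Fin p) (Fin p) ℝ) i₀ i₀ = 0 := by rw [← hSinv]; rfl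
    simp [Matrix.one_apply] at h1
  obtain ⟨j, k, hjk⟩ : ∃ j k, Ω₀ j k ≠ 0 := by
    by_contra h; push_neg at h
    exact hΩne (by ext j k; simpa using h j k)
  have hL1pos : 0 < matL1 Ω₀ := by
    have h1 : 0 < ∑ i, |Ω₀ i k| :=
      Finset.sum_pos' (fun _ _ => abs_nonneg _) ⟨j, Finset.mem_univ j, abs_pos.mpr hjk⟩
    exact lt_of_lt_of_le h1 (colsum_le_matL1 Ω₀ k)
  have hInf_le : matInf (S' - S₀) ≤ lam / matL1 Ω₀ := by
    rw [le_div_iff₀ hL1pos, mul_comm]; exact hlow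
  have hentry : ∀ a b, |(S' - S₀) a b| ≤ matInf (S' - S₀) := by
    intro a b
    exact entry_le_matInf _ a b
  have hres : ∀ a, |(S'.mulVec β - Pi.single i₀ 1 : Fin p → ℝ) a| ≤ lam := by
    intro a; exact le_trans (abs_le_vecInf (S'.mulVec β - Pi.single i₀ 1) a) hstop
  have hkey : S₀.mulVec (βhat - β)
      = (Pi.single i₀ 1 - S'.mulVec β) + (S' - S₀).mulVec β := by
    have h1 : S₀.mulVec βhat = Pi.single i₀ 1 := by
      rw [hβhat, Matrix.mulVec_mulVec, hSinv, Matrix.one_mulVec]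
    funext a
    have := congrFun h1 a
    simp only [Matrix.mulVec_sub, Matrix.sub_mulVec, Pi.sub_apply, Pi.add_apply, this]
    ring
  have hL1β : 0 ≤ vecL1 β := Finset.sum_nonneg fun _ _ => abs_nonneg _
  have hcomp : ∀ a, |(S₀.mulVec (βhat - β)) a| ≤ lam + matInf (S' - S₀) * vecL1 β := by
    intro a
    rw [hkey]
    calc |((Pi.single i₀ 1 - S'.mulVec β : Fin p → ℝ) + (S' - S₀).mulVec β) a|
        ≤ |(Pi.single i₀ 1 - S'.mulVec β : Fin p → ℝ) a| + |((S' - S₀).mulVec β) a| := abs_add_le _ _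
      _ ≤ lam + matInf (S' - S₀) * vecL1 β := by
          gcongr
          · have : |(Pi.single i₀ 1 - S'.mulVec β : Fin p → ℝ) a| = |(S'.mulVec β - Pi.single i₀ 1 : Fin p → ℝ) a| := by
              rw [← abs_neg]; congr 1; simp
            rw [this]; exact hres a
          · calc |((S' - S₀).mulVec β) a| = |∑ b, (S' - S₀) a b * β b| := rfl
              _ ≤ ∑ b, |(S' - S₀) a b * β b| := Finset.abs_sum_le_sum_abs _ _
              _ ≤ ∑ b, matInf (S' - S₀) * |β b| := by
                  refine Finset.sum_le_sum fun b _ => ?_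
                  rw [abs_mul]
                  exact mul_le_mul_of_nonneg_right (hentry a b) (abs_nonneg _)
              _ = matInf (S' - S₀) * vecL1 β := by rw [← Finset.mul_sum]; rfl
  refine vecInf_le _ _ fun a => le_trans (hcomp a) ?_
  have h2 : matInf (S' - S₀) * vecL1 β ≤ (lam / matL1 Ω₀) * vecL1 β :=
    mul_le_mul_of_nonneg_right hInf_le hL1β
  have h3 : (lam / matL1 Ω₀) * vecL1 β = lam * vecL1 β / matL1 Ω₀ := by ring
  linarith
end

section
/- Let p ≥ 1, let Σ₀ ∈ ℝ^{p×p} be symmetric positive definite with inverse Ω₀ = Σ₀⁻¹, let Σ' ∈ ℝ^{p×p} and λ ≥ 0 satisfy ‖Ω₀‖_{L1} · |Σ' − Σ₀|_∞ ≤ λ and pλ < 1. Suppose Ω̂¹ ∈ ℝ^{p×p} satisfies |Σ'Ω̂¹ − I|_∞ ≤ λ. Then ‖Ω̂¹‖_{L1} ≤ ((1 + 3pλ)/(1 − pλ)) · ‖Ω₀‖_{L1}. -/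
/-!
Since `Ω₀ Σ₀ = I`, the matrix `Ω̂¹` decomposes as `Ω₀ + Ω₀ (Σ' Ω̂¹ - I) - Ω₀ (Σ' - Σ₀) Ω̂¹`.
Bounding each term with the triangle inequality, submultiplicativity of the `L₁` norm and
`‖B‖_{L1} ≤ p |B|_∞` gives `‖Ω̂¹‖_{L1} ≤ (1 + pλ) ‖Ω₀‖_{L1} + pλ ‖Ω̂¹‖_{L1}`, and `pλ < 1` lets us
solve for `‖Ω̂¹‖_{L1}`.
-/

open Matrix

section

variable {p : ℕ}

theorem abs_le_matInf (A : Matrix (Fin p) (Fin p) ℝ) (i j : Fin p) : |A i j| ≤ matInf A :=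
  (le_ciSup (f := fun j => |A i j|) (Set.finite_range _).bddAbove j).trans
    (le_ciSup (f := fun i => ⨆ j, |A i j|) (Set.finite_range _).bddAbove i)

theorem matInf_nonneg (A : Matrix (Fin p) (Fin p) ℝ) : 0 ≤ matInf A :=
  Real.iSup_nonneg fun _ => Real.iSup_nonneg fun _ => abs_nonneg _

theorem sum_abs_le_matL1 (A : Matrix (Fin p) (Fin p) ℝ) (j : Fin p) : ∑ i, |A i j| ≤ matL1 A :=
  le_ciSup (f := fun j => ∑ i, |A i j|) (Set.finite_range _).bddAbove j

theorem matL1_nonneg (A : Matrix (Fin p) (Fin p) ℝ) : 0 ≤ matL1 A :=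
  Real.iSup_nonneg fun _ => Finset.sum_nonneg fun _ _ => abs_nonneg _

theorem matL1_le_card_mul_matInf (A : Matrix (Fin p) (Fin p) ℝ) : matL1 A ≤ p * matInf A := by
  refine Real.iSup_le (fun j => ?_) (mul_nonneg p.cast_nonneg (matInf_nonneg A))
  calc ∑ i, |A i j| ≤ ∑ _i : Fin p, matInf A := Finset.sum_le_sum fun i _ => abs_le_matInf A i j
    _ = p * matInf A := by simp

section LinftyOpNorm

attribute [local instance] Matrix.linftyOpSeminormedAddCommGroup

theorem matL1_eq_linfty_opNorm_transpose (A : Matrix (Fin p) (Fin p) ℝ) : matL1 A = ‖Aᵀ‖ := by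
  simp only [linfty_opNorm_def, transpose_apply]
  apply le_antisymm
  · refine Real.iSup_le (fun j => ?_) (NNReal.coe_nonneg _)
    simpa [← NNReal.coe_le_coe] using
      Finset.le_sup (f := fun j => ∑ i, ‖A i j‖₊) (Finset.mem_univ j)
  · refine NNReal.coe_le_coe.2 (Finset.sup_le (a := ⟨matL1 A, matL1_nonneg A⟩) fun j _ => ?_)
    exact NNReal.coe_le_coe.1 (by simpa using sum_abs_le_matL1 A j :
      ((∑ i, ‖A i j‖₊ : NNReal) : ℝ) ≤ matL1 A)

theorem matL1_add_le (A B : Matrix (Fin p) (Fin p) ℝ) : matL1 (A + B) ≤ matL1 A + matL1 B := by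
  simpa only [matL1_eq_linfty_opNorm_transpose, transpose_add] using norm_add_le Aᵀ Bᵀ

theorem matL1_sub_le (A B : Matrix (Fin p) (Fin p) ℝ) : matL1 (A - B) ≤ matL1 A + matL1 B := by
  simpa only [matL1_eq_linfty_opNorm_transpose, transpose_sub] using norm_sub_le Aᵀ Bᵀ

theorem matL1_mul_le (A B : Matrix (Fin p) (Fin p) ℝ) : matL1 (A * B) ≤ matL1 A * matL1 B := by
  rw [matL1_eq_linfty_opNorm_transpose, matL1_eq_linfty_opNorm_transpose,
    matL1_eq_linfty_opNorm_transpose, transpose_mul, mul_comm]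
  exact linfty_opNorm_mul Bᵀ Aᵀ

end LinftyOpNorm

theorem matL1_mul_le_card_mul_matInf (A B : Matrix (Fin p) (Fin p) ℝ) :
    matL1 (A * B) ≤ p * (matL1 A * matInf B) :=
  calc matL1 (A * B) ≤ matL1 A * (p * matInf B) :=
        (matL1_mul_le A B).trans
          (mul_le_mul_of_nonneg_left (matL1_le_card_mul_matInf B) (matL1_nonneg A))
    _ = p * (matL1 A * matInf B) := by ring

theorem matL1_le_of_mul_eq_one {Ω₀ S₀ : Matrix (Fin p) (Fin p) ℝ} (hinv : Ω₀ * S₀ = 1)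
    (S' M : Matrix (Fin p) (Fin p) ℝ) :
    matL1 M ≤ (1 + p * matInf (S' * M - 1)) * matL1 Ω₀
      + p * (matL1 Ω₀ * matInf (S' - S₀)) * matL1 M := by
  have hM : M = Ω₀ + Ω₀ * (S' * M - 1) - Ω₀ * (S' - S₀) * M :=
    calc M = Ω₀ * S₀ * M := by rw [hinv, one_mul]
      _ = Ω₀ + Ω₀ * (S' * M - 1) - Ω₀ * (S' - S₀) * M := by noncomm_ring
  calc matL1 M ≤ matL1 (Ω₀ + Ω₀ * (S' * M - 1)) + matL1 (Ω₀ * (S' - S₀) * M) := by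
        conv_lhs => rw [hM]
        exact matL1_sub_le _ _
    _ ≤ matL1 Ω₀ + matL1 (Ω₀ * (S' * M - 1)) + matL1 (Ω₀ * (S' - S₀)) * matL1 M :=
        add_le_add (matL1_add_le _ _) (matL1_mul_le _ _)
    _ ≤ matL1 Ω₀ + p * (matL1 Ω₀ * matInf (S' * M - 1))
          + p * (matL1 Ω₀ * matInf (S' - S₀)) * matL1 M :=
        add_le_add (add_le_add le_rfl (matL1_mul_le_card_mul_matInf _ _))
          (mul_le_mul_of_nonneg_right (matL1_mul_le_card_mul_matInf _ _) (matL1_nonneg M))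
    _ = (1 + p * matInf (S' * M - 1)) * matL1 Ω₀
          + p * (matL1 Ω₀ * matInf (S' - S₀)) * matL1 M := by ring

end

theorem stmt8_general {p : ℕ}
    (S₀ : Matrix (Fin p) (Fin p) ℝ) (hSpd : S₀.PosDef)
    (Ω₀ : Matrix (Fin p) (Fin p) ℝ) (hΩ : Ω₀ = S₀⁻¹)
    (S' : Matrix (Fin p) (Fin p) ℝ) (lam : ℝ) (hlam : 0 ≤ lam)
    (hlow : matL1 Ω₀ * matInf (S' - S₀) ≤ lam) (hhigh : (p : ℝ) * lam < 1)
    (Ωhat1 : Matrix (Fin p) (Fin p) ℝ)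
    (hstop : matInf (S' * Ωhat1 - 1) ≤ lam) :
    matL1 Ωhat1 ≤ ((1 + 3 * (p : ℝ) * lam) / (1 - (p : ℝ) * lam)) * matL1 Ω₀ := by
  have hinv : Ω₀ * S₀ = 1 := hΩ ▸ nonsing_inv_mul S₀ hSpd.det_pos.ne'.isUnit
  have hbound := matL1_le_of_mul_eq_one hinv S' Ωhat1
  have hstop' : (p : ℝ) * matInf (S' * Ωhat1 - 1) ≤ p * lam :=
    mul_le_mul_of_nonneg_left hstop p.cast_nonneg
  have hlow' : (p : ℝ) * (matL1 Ω₀ * matInf (S' - S₀)) ≤ p * lam :=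
    mul_le_mul_of_nonneg_left hlow p.cast_nonneg
  have hΩ₀ := matL1_nonneg Ω₀
  have hΩhat1 := matL1_nonneg Ωhat1
  rw [div_mul_eq_mul_div, le_div_iff₀ (sub_pos.2 hhigh)]
  nlinarith [mul_nonneg (mul_nonneg p.cast_nonneg hlam) hΩ₀,
    mul_le_mul_of_nonneg_right hstop' hΩ₀, mul_le_mul_of_nonneg_right hlow' hΩhat1]

/-- L₁-operator-norm bound for any matrix satisfying the stopping criterion. -/
theorem stmt8 {p : ℕ} (hp : 1 ≤ p)
    (S₀ : Matrix (Fin p) (Fin p) ℝ) (hSsym : S₀.IsSymm) (hSpd : S₀.PosDef)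
    (Ω₀ : Matrix (Fin p) (Fin p) ℝ) (hΩ : Ω₀ = S₀⁻¹)
    (S' : Matrix (Fin p) (Fin p) ℝ) (lam : ℝ) (hlam : 0 ≤ lam)
    (hlow : matL1 Ω₀ * matInf (S' - S₀) ≤ lam) (hhigh : (p : ℝ) * lam < 1)
    (Ωhat1 : Matrix (Fin p) (Fin p) ℝ)
    (hstop : matInf (S' * Ωhat1 - 1) ≤ lam) :
    matL1 Ωhat1 ≤ ((1 + 3 * (p : ℝ) * lam) / (1 - (p : ℝ) * lam)) * matL1 Ω₀ :=
  stmt8_general S₀ hSpd Ω₀ hΩ S' lam hlam hlow hhigh Ωhat1 hstop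
end
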